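/- Let A be a symmetric N×N integer matrix, I the N×N identity matrix, and let τ: ℚ(q) → ℚ(q) be the ℚ-algebra automorphism with τ(q) = q^{−1}, applied coefficientwise to ℚ(q)[[t_1,…,t_N]]. Then F_A(t,q) = τ(F_{I−A}(t,q)); that is, F_A(t,q) = F_{I−A}(t,q^{−1}). -/

import Mathlib

/-!
STATEMENT 7: For a symmetric integer matrix `A` and the ℚ-algebra automorphism `τ` of
`ℚ(q)` with `τ(q) = q⁻¹` (applied coefficientwise), one has
`F_A(t,q) = τ(F_{I-A}(t,q))`, i.e. `F_A(t,q) = F_{I-A}(t,q⁻¹)`.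
-/

/-- `(q;q)_k = ∏_{j=1}^k (1 - q^j)` in `ℚ(q)`. -/
noncomputable def qPochR (k : ℕ) : RatFunc ℚ :=
  ∏ j ∈ Finset.Icc 1 k, (1 - RatFunc.X ^ j)

/-- The coefficient of `t^n` (for `n = d`) in the Nahm sum `F_A`. -/
noncomputable def nahmCoeff {N : ℕ} (A : Matrix (Fin N) (Fin N) ℤ) (d : Fin N →₀ ℕ) :
    RatFunc ℚ :=
  ((-1 : RatFunc ℚ) ^ (∑ i, A i i * (d i : ℤ)) *
      RatFunc.X ^
        (((∑ i, ∑ j, A i j * (d i : ℤ) * (d j : ℤ)) + ∑ i, A i i * (d i : ℤ)) / 2)) /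
    ∏ i, qPochR (d i)

/-- The Nahm sum `F_A(t,q) ∈ ℚ(q)[[t_1,…,t_N]]`. -/
noncomputable def nahmF {N : ℕ} (A : Matrix (Fin N) (Fin N) ℤ) :
    MvPowerSeries (Fin N) (RatFunc ℚ) :=
  fun d => nahmCoeff A d

open Finset


/-!
Substituting `q ↦ q⁻¹` turns each factor `1 - q^j` of `(q;q)_k` into `-q^{-j}(1 - q^j)`, so
`τ (q;q)_k = (-1)^k q^{-k(k+1)/2} (q;q)_k`. For `B = I - A` one has
`nᵀBn + diag(B)·n = ∑ n_i(n_i + 1) - (nᵀAn + diag(A)·n)`, so the numerator monomial of the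
`B`-coefficient, after `τ`, is that of the `A`-coefficient times `(-1)^{∑ n_i} q^{-∑ n_i(n_i+1)/2}`:
exactly the factor `τ` puts on the denominator. Symmetry of `A` gives `nᵀAn ≡ diag(A)·n (mod 2)`,
which makes the halved exponents exact (the definition uses truncating division in `ℤ`).
-/

open Finset

lemma two_mul_sum_Icc_one (k : ℕ) : 2 * ∑ j ∈ Icc 1 k, j = k * k + k := by
  induction k with
  | zero => simp
  | succ k ih => rw [sum_Icc_succ_top (by omega), mul_add, ih]; ring

lemma pow_sum_mul_prod_one_sub_inv_pow {K : Type*} [Field K] {x : K} (hx : x ≠ 0)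
    (s : Finset ℕ) :
    x ^ (∑ j ∈ s, j) * ∏ j ∈ s, (1 - x⁻¹ ^ j) = (-1) ^ #s * ∏ j ∈ s, (1 - x ^ j) := by
  rw [← prod_pow_eq_pow_sum, ← prod_const, ← prod_mul_distrib, ← prod_mul_distrib]
  refine prod_congr rfl fun j _ => ?_
  rw [mul_sub, mul_one, ← mul_pow, mul_inv_cancel₀ hx, one_pow]
  ring

lemma sum_sum_eq_sum_diag_of_symm {ι R : Type*} [Ring R] [CharP R 2] {f : ι → ι → R}
    (hf : ∀ i j, f i j = f j i) (s : Finset ι) :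
    ∑ i ∈ s, ∑ j ∈ s, f i j = ∑ i ∈ s, f i i := by
  classical
  induction s using Finset.induction_on with
  | empty => simp
  | insert a s ha ih =>
    simp only [sum_insert ha, sum_add_distrib, ih]
    rw [sum_congr rfl fun i _ => hf i a,
      show ∀ x y z : R, x + y + (y + z) = x + z + (y + y) by intros; abel,
      CharTwo.add_self_eq_zero, add_zero]

lemma Matrix.IsSymm.two_dvd_quad_add_diag {ι : Type*} [Fintype ι] {A : Matrix ι ι ℤ}
    (hA : A.IsSymm) (v : ι → ℤ) : 2 ∣ (∑ i, ∑ j, A i j * v i * v j) + ∑ i, A i i * v i := by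
  refine (ZMod.intCast_zmod_eq_zero_iff_dvd _ 2).mp ?_
  push_cast
  rw [sum_sum_eq_sum_diag_of_symm (fun i j => by rw [hA.apply i j]; ring), ← sum_add_distrib]
  have h : ∀ a x : ZMod 2, a * x * x + a * x = 0 := by decide
  exact sum_eq_zero fun i _ => h _ _

lemma sum_one_sub_diag_mul {ι : Type*} [Fintype ι] [DecidableEq ι] (A : Matrix ι ι ℤ)
    (v : ι → ℤ) : ∑ i, (1 - A) i i * v i = ∑ i, v i - ∑ i, A i i * v i := by
  simp [sub_mul, sum_sub_distrib]

lemma sum_sum_one_sub_mul {ι : Type*} [Fintype ι] [DecidableEq ι] (A : Matrix ι ι ℤ)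
    (v : ι → ℤ) : ∑ i, ∑ j, (1 - A) i j * v i * v j
      = ∑ i, v i * v i - ∑ i, ∑ j, A i j * v i * v j := by
  simp [sub_mul, sum_sub_distrib, Matrix.one_apply]

open RatFunc

lemma map_qPochR {τ : RatFunc ℚ →+* RatFunc ℚ} (hτ : τ X = X⁻¹) (k : ℕ) :
    τ (qPochR k) = (-1) ^ k / X ^ (∑ j ∈ Icc 1 k, j) * qPochR k := by
  rw [div_mul_eq_mul_div, eq_div_iff (pow_ne_zero _ X_ne_zero), mul_comm]
  simp only [qPochR, map_prod, map_sub, map_one, map_pow, hτ]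
  rw [pow_sum_mul_prod_one_sub_inv_pow X_ne_zero, Nat.card_Icc, Nat.add_sub_cancel]

lemma map_prod_qPochR {ι : Type*} [Fintype ι] {τ : RatFunc ℚ →+* RatFunc ℚ}
    (hτ : τ X = X⁻¹) (d : ι → ℕ) :
    τ (∏ i, qPochR (d i))
      = (-1) ^ (∑ i, d i) / X ^ (∑ i, ∑ j ∈ Icc 1 (d i), j) * ∏ i, qPochR (d i) := by
  simp only [map_prod, map_qPochR hτ, prod_mul_distrib, prod_div_distrib, prod_pow_eq_pow_sum]

lemma map_nahmCoeff_one_sub {N : ℕ} {A : Matrix (Fin N) (Fin N) ℤ} (hA : A.IsSymm)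
    {τ : RatFunc ℚ →+* RatFunc ℚ} (hτ : τ X = X⁻¹) (d : Fin N →₀ ℕ) :
    τ (nahmCoeff (1 - A) d) = nahmCoeff A d := by
  obtain ⟨a, ha⟩ := hA.two_dvd_quad_add_diag fun i => (d i : ℤ)
  set b := ∑ i, ∑ j ∈ Icc 1 (d i), j
  have hb : ∑ i, (d i : ℤ) * d i + ∑ i, (d i : ℤ) = 2 * b := by
    have hb_nat : ∑ i, d i * d i + ∑ i, d i = 2 * b := by
      rw [← sum_add_distrib, mul_sum]
      exact sum_congr rfl fun i _ => (two_mul_sum_Icc_one (d i)).symm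
    exact_mod_cast hb_nat
  rw [nahmCoeff, nahmCoeff, sum_one_sub_diag_mul, sum_sum_one_sub_mul]
  set Q := ∑ i, ∑ j, A i j * (d i : ℤ) * d j
  set L := ∑ i, A i i * (d i : ℤ)
  rw [Int.ediv_eq_of_eq_mul_right two_ne_zero ha,
    Int.ediv_eq_of_eq_mul_right (c := b - a) two_ne_zero (by linarith)]
  have hnum : τ ((-1) ^ ((∑ i, d i : ℕ) - L) * X ^ ((b : ℤ) - a))
      = (-1) ^ (∑ i, d i) / X ^ b * ((-1) ^ L * X ^ a) := by
    have hsign : ((-1 : RatFunc ℚ) ^ L)⁻¹ = (-1) ^ L := by rw [← inv_zpow, inv_neg, inv_one]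
    rw [map_mul, map_zpow₀, map_zpow₀, map_neg, map_one, hτ, inv_zpow', neg_sub,
      zpow_sub₀ (by norm_num), zpow_sub₀ X_ne_zero, zpow_natCast, zpow_natCast, div_eq_mul_inv,
      hsign]
    ring
  rw [← Nat.cast_sum, map_div₀, hnum, map_prod_qPochR hτ,
    mul_div_mul_left _ _ (div_ne_zero (by simp) (pow_ne_zero _ X_ne_zero))]

theorem statement7 (N : ℕ) (A : Matrix (Fin N) (Fin N) ℤ) (hA : A.IsSymm)
    (τ : RatFunc ℚ →ₐ[ℚ] RatFunc ℚ) (hτ : τ RatFunc.X = (RatFunc.X)⁻¹) :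
    nahmF A = MvPowerSeries.map τ.toRingHom (nahmF (1 - A)) := by
  ext d
  rw [MvPowerSeries.coeff_map]
  exact (map_nahmCoeff_one_sub hA (τ := τ.toRingHom) hτ d).symm
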